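/- arXiv:1106.3560 — 2 statements merged into one kernel-verified Lean document; each statement's English description precedes it below -/
import Mathlib

section
/- Let R > 0, α > 0 with R ≥ 4/α and 4α < 1. Define u : (0, R] → ℝ by u(r) = (4α R⁴/r⁴ - 1) exp(α(R - R²/r)). Then for all r ∈ (0, R], u(r) ≤ exp(-α((4α)^{-1/4} - 1) R). -/
/-- For R ≥ 4/α and 4α < 1, u(r) = (4αR⁴/r⁴ - 1)exp(α(R - R²/r)) satisfies
u(r) ≤ exp(-α((4α)^{-1/4} - 1)R) on (0, R]. -/
theorem u_bound (R α : ℝ) (hR : 0 < R) (hα : 0 < α) (hRα : R ≥ 4 / α)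
    (hα4 : 4 * α < 1)
    (u : ℝ → ℝ)
    (hu : ∀ r : ℝ, u r = (4 * α * R ^ 4 / r ^ 4 - 1) * Real.exp (α * (R - R ^ 2 / r))) :
    ∀ r ∈ Set.Ioc (0 : ℝ) R,
      u r ≤ Real.exp (-α * ((4 * α) ^ (-(1 : ℝ) / 4) - 1) * R) := by
  intro r hr
  obtain ⟨hr0, hrR⟩ := hr
  rw [hu]
  have h4α : (0:ℝ) < 4 * α := by linarith
  set c := (4 * α) ^ ((1:ℝ)/4) with hc
  have hc0 : 0 < c := Real.rpow_pos_of_pos h4α _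
  have hc1 : c < 1 := Real.rpow_lt_one h4α.le hα4 (by norm_num)
  have hc4 : c ^ 4 = 4 * α := by
    rw [hc, ← Real.rpow_natCast ((4*α) ^ ((1:ℝ)/4)) 4, ← Real.rpow_mul h4α.le]
    norm_num
  have hinv : (4 * α) ^ (-(1:ℝ)/4) = 1 / c := by
    rw [neg_div, Real.rpow_neg h4α.le, hc, one_div]
    norm_num
  have hαR : 4 ≤ α * R := by
    rw [ge_iff_le, div_le_iff₀ hα] at hRα
    linarith
  set s := c * R / r with hs
  have hs0 : 0 < s := by positivity
  have hseq : s ^ 4 = 4 * α * R ^ 4 / r ^ 4 := by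
    rw [hs, div_pow, mul_pow, hc4]
  rw [hinv]
  by_cases hcase : 4 * α * R ^ 4 / r ^ 4 ≤ 1
  · have h1 : (4 * α * R ^ 4 / r ^ 4 - 1) * Real.exp (α * (R - R ^ 2 / r)) ≤ 0 :=
      mul_nonpos_of_nonpos_of_nonneg (by linarith) (Real.exp_pos _).le
    exact h1.trans (Real.exp_pos _).le
  · push_neg at hcase
    have hs1 : 1 ≤ s := by
      by_contra h
      push_neg at h
      have : s ^ 4 ≤ 1 := pow_le_one₀ hs0.le h.le
      rw [hseq] at this; linarith
    have hexp : s ≤ Real.exp (s - 1) := by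
      have := Real.add_one_le_exp (s - 1)
      linarith
    have hs4 : s ^ 4 ≤ Real.exp (4 * (s - 1)) := by
      calc s ^ 4 ≤ Real.exp (s - 1) ^ 4 := pow_le_pow_left₀ hs0.le hexp 4
        _ = Real.exp (4 * (s - 1)) := by rw [← Real.exp_nat_mul]; norm_num
    have hsr : s * r = c * R := by
      rw [hs]; field_simp
    have hkey : 4 * (s - 1) + α * (R - R ^ 2 / r) ≤ -α * (1 / c - 1) * R := by
      have e1 : R ^ 2 / r = R * s / c := by
        rw [div_eq_div_iff (ne_of_gt hr0) (ne_of_gt hc0)]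
        nlinarith [hsr]
      have hnum : 0 ≤ (α * R - 4 * c) * (s - 1) :=
        mul_nonneg (by linarith) (by linarith)
      have h3 : -α * (1 / c - 1) * R =
          4 * (s - 1) + α * (R - R * s / c) + ((α * R - 4 * c) * (s - 1)) / c := by
        field_simp
        ring
      have h4 : 0 ≤ ((α * R - 4 * c) * (s - 1)) / c := div_nonneg hnum hc0.le
      rw [e1, h3]
      linarith
    calc (4 * α * R ^ 4 / r ^ 4 - 1) * Real.exp (α * (R - R ^ 2 / r))
        ≤ s ^ 4 * Real.exp (α * (R - R ^ 2 / r)) := by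
          rw [hseq]
          exact mul_le_mul_of_nonneg_right (by linarith) (Real.exp_pos _).le
      _ ≤ Real.exp (4 * (s - 1)) * Real.exp (α * (R - R ^ 2 / r)) :=
          mul_le_mul_of_nonneg_right hs4 (Real.exp_pos _).le
      _ = Real.exp (4 * (s - 1) + α * (R - R ^ 2 / r)) := (Real.exp_add _ _).symm
      _ ≤ Real.exp (-α * (1 / c - 1) * R) := Real.exp_le_exp.2 hkey
end

section
/- Let α ∈ (0, 1/4) and R ≥ 4/α. Then the function r ↦ (4α R⁴/r⁴ - 1)·exp(α(R - R²/r)) attains nonpositive values for all r ∈ [(4α)^{1/4} R, R], and in particular its supremum over (0, R] is at most max(0, exp(-α((4α)^{-1/4} - 1)R)) = exp(-α((4α)^{-1/4} - 1)R). -/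
/-- For 0 < α < 1/4 and R ≥ 4/α, u(r) = (4αR⁴/r⁴ - 1)exp(α(R - R²/r)) is
nonpositive on [(4α)^{1/4}R, R], and its supremum over (0, R] is at most
exp(-α((4α)^{-1/4} - 1)R). -/
theorem u_nonpositive_and_sup (R α : ℝ) (hα : 0 < α) (hα4 : α < 1 / 4)
    (hRα : R ≥ 4 / α)
    (u : ℝ → ℝ)
    (hu : ∀ r : ℝ, u r = (4 * α * R ^ 4 / r ^ 4 - 1) * Real.exp (α * (R - R ^ 2 / r))) :
    (∀ r ∈ Set.Icc ((4 * α) ^ ((1 : ℝ) / 4) * R) R, u r ≤ 0) ∧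
    (∀ r ∈ Set.Ioc (0 : ℝ) R,
      u r ≤ Real.exp (-α * ((4 * α) ^ (-(1 : ℝ) / 4) - 1) * R)) ∧
    max 0 (Real.exp (-α * ((4 * α) ^ (-(1 : ℝ) / 4) - 1) * R)) =
      Real.exp (-α * ((4 * α) ^ (-(1 : ℝ) / 4) - 1) * R) := by
  have hR : 0 < R := lt_of_lt_of_le (by positivity) hRα
  set c : ℝ := (4 * α) ^ ((1 : ℝ) / 4) with hc
  have h4α : 0 < 4 * α := by linarith
  have hc0 : 0 < c := Real.rpow_pos_of_pos h4α _
  have hc4 : c ^ 4 = 4 * α := by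
    rw [hc, ← Real.rpow_natCast ((4 * α) ^ ((1 : ℝ) / 4)) 4, ← Real.rpow_mul h4α.le]
    norm_num
  have hinv : (4 * α) ^ (-(1 : ℝ) / 4) = c⁻¹ := by
    rw [show (-(1 : ℝ) / 4) = -(1 / 4) by ring, Real.rpow_neg h4α.le, hc]
  have hαR : 4 ≤ α * R := by
    rw [ge_iff_le, div_le_iff₀ hα] at hRα; linarith
  have hc1 : c < 1 := Real.rpow_lt_one h4α.le (by linarith) (by norm_num)
  -- Part 1: nonpositive on [cR, R]
  have part1 : ∀ r ∈ Set.Icc (c * R) R, u r ≤ 0 := by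
    intro r hr
    obtain ⟨h1, h2⟩ := hr
    have hr0 : 0 < r := lt_of_lt_of_le (by positivity) h1
    have hr4 : 4 * α * R ^ 4 ≤ r ^ 4 := by
      calc 4 * α * R ^ 4 = (c * R) ^ 4 := by rw [mul_pow, hc4]
        _ ≤ r ^ 4 := pow_le_pow_left₀ (by positivity) h1 4
    rw [hu r]
    have hE : 0 < Real.exp (α * (R - R ^ 2 / r)) := Real.exp_pos _
    have hfac : 4 * α * R ^ 4 / r ^ 4 - 1 ≤ 0 := by
      have : 4 * α * R ^ 4 / r ^ 4 ≤ 1 := (div_le_one (by positivity)).mpr hr4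
      linarith
    exact mul_nonpos_of_nonpos_of_nonneg hfac hE.le
  refine ⟨part1, ?_, max_eq_right (Real.exp_pos _).le⟩
  -- The value of the exponential at s = cR:
  set s : ℝ := c * R with hsdef
  have hs0 : 0 < s := by positivity
  have hsR : s ≤ R := by nlinarith
  have htarget : α * (R - R ^ 2 / s) = -α * ((4 * α) ^ (-(1 : ℝ) / 4) - 1) * R := by
    rw [hinv, hsdef]
    field_simp
    ring
  intro r hr
  obtain ⟨hr0, hrR⟩ := hr
  by_cases hcase : s ≤ r
  · have := part1 r ⟨hcase, hrR⟩
    exact this.trans (Real.exp_pos _).le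
  · push_neg at hcase
    have hrs : r ≤ s := hcase.le
    have h4s : 4 * s ≤ α * R ^ 2 := by nlinarith
    -- log inequality
    have hlog : Real.log (s / r) ≤ s / r - 1 := Real.log_le_sub_one_of_pos (by positivity)
    have hstep : 4 * (s / r - 1) ≤ α * R ^ 2 / r - α * R ^ 2 / s := by
      have heq : α * R ^ 2 / r - α * R ^ 2 / s - 4 * (s / r - 1)
          = (α * R ^ 2 - 4 * s) * (s - r) / (r * s) := by
        field_simp
      have hnn : 0 ≤ (α * R ^ 2 - 4 * s) * (s - r) / (r * s) :=
        div_nonneg (mul_nonneg (by linarith) (by linarith)) (by positivity)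
      linarith
    have hexp : (s / r) ^ 4 ≤ Real.exp (α * R ^ 2 / r - α * R ^ 2 / s) := by
      have h1 : (s / r) ^ 4 = Real.exp (4 * Real.log (s / r)) := by
        rw [show (4 : ℝ) * Real.log (s / r) = (4 : ℕ) * Real.log (s / r) by norm_num,
          Real.exp_nat_mul, Real.exp_log (by positivity)]
      rw [h1]
      exact Real.exp_le_exp.mpr (by linarith)
    -- monotonicity: 4αR⁴/r⁴ · Er ≤ 4αR⁴/s⁴ · Es
    set Er := Real.exp (α * (R - R ^ 2 / r)) with hEr
    set Es := Real.exp (α * (R - R ^ 2 / s)) with hEs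
    have hEr0 : 0 < Er := Real.exp_pos _
    have hEs0 : 0 < Es := Real.exp_pos _
    have hEsplit : Es = Er * Real.exp (α * R ^ 2 / r - α * R ^ 2 / s) := by
      rw [hEr, hEs, ← Real.exp_add]
      ring_nf
    have hmono : 4 * α * R ^ 4 / r ^ 4 * Er ≤ 4 * α * R ^ 4 / s ^ 4 * Es := by
      rw [hEsplit]
      have hkey : (s / r) ^ 4 * Er ≤ Real.exp (α * R ^ 2 / r - α * R ^ 2 / s) * Er :=
        mul_le_mul_of_nonneg_right hexp hEr0.le
      have hsr : (s / r) ^ 4 = s ^ 4 / r ^ 4 := div_pow s r 4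
      have h44 : 4 * α * R ^ 4 / s ^ 4 * (s ^ 4 / r ^ 4) = 4 * α * R ^ 4 / r ^ 4 := by
        field_simp
      calc 4 * α * R ^ 4 / r ^ 4 * Er
          = 4 * α * R ^ 4 / s ^ 4 * ((s / r) ^ 4 * Er) := by
            rw [hsr, ← mul_assoc, h44]
        _ ≤ 4 * α * R ^ 4 / s ^ 4 * (Real.exp (α * R ^ 2 / r - α * R ^ 2 / s) * Er) := by
            apply mul_le_mul_of_nonneg_left hkey (by positivity)
        _ = 4 * α * R ^ 4 / s ^ 4 * (Er * Real.exp (α * R ^ 2 / r - α * R ^ 2 / s)) := by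
            ring
    have hs4 : 4 * α * R ^ 4 / s ^ 4 = 1 := by
      rw [hsdef, mul_pow, hc4]
      field_simp
    rw [hu r, ← htarget]
    have : (4 * α * R ^ 4 / r ^ 4 - 1) * Er ≤ 4 * α * R ^ 4 / r ^ 4 * Er := by
      nlinarith
    calc (4 * α * R ^ 4 / r ^ 4 - 1) * Er ≤ 4 * α * R ^ 4 / r ^ 4 * Er := this
      _ ≤ 4 * α * R ^ 4 / s ^ 4 * Es := hmono
      _ = Es := by rw [hs4, one_mul]
end
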